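/- arXiv:1609.01891 — 3 statements merged into one kernel-verified Lean document; each statement's English description precedes it below -/
import Mathlib

section
/- Let G = ⟨a₁, …, a_k, t | a_j t a_j⁻¹ = t⁻¹ for all j, a₁²⋯a_k² = t^{k-2}⟩ and let f : G → G^{ab} be the abelianization map. If k is even, then the image of t in G^{ab} has order exactly 2. -/
/-- Relations for the presentation of π₁(ST*N_k). -/
def stRels (k : ℕ) : Set (FreeGroup (Fin k ⊕ Unit)) :=
  {r | (∃ j : Fin k, r = FreeGroup.of (Sum.inl j) * FreeGroup.of (Sum.inr ()) *
        (FreeGroup.of (Sum.inl j))⁻¹ * FreeGroup.of (Sum.inr ())) ∨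
    r = (List.ofFn fun j : Fin k => (FreeGroup.of (Sum.inl j)) ^ 2).prod *
        (FreeGroup.of (Sum.inr ()) : FreeGroup (Fin k ⊕ Unit)) ^ (-((k : ℤ) - 2))}

/-! Once commutators are killed, the relation `a t a⁻¹ = t⁻¹` becomes `t² = 1`. For `k` even,
sending every `a_j` to `1` and `t` to the generator of `ℤ/2` respects both relations, so `t`
survives in the abelianization. -/

namespace StRels

lemma of_mul_of_mul_inv_mul_of_eq_one (k : ℕ) (j : Fin k) :
    (PresentedGroup.of (Sum.inl j) * PresentedGroup.of (Sum.inr ()) *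
      (PresentedGroup.of (Sum.inl j))⁻¹ * PresentedGroup.of (Sum.inr ()) :
        PresentedGroup (stRels k)) = 1 :=
  PresentedGroup.one_of_mem (Or.inl ⟨j, rfl⟩)

lemma abelianization_of_t_sq (k : ℕ) (j : Fin k) :
    Abelianization.of (PresentedGroup.of (Sum.inr ()) : PresentedGroup (stRels k)) ^ 2 = 1 := by
  have h := congrArg Abelianization.of (of_mul_of_mul_inv_mul_of_eq_one k j)
  rwa [map_mul, map_mul, map_mul, map_inv, map_one, mul_right_comm (Abelianization.of _),
    mul_inv_cancel, one_mul, ← sq] at h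

lemma lift_eq_one_of_mem {H : Type*} [Group H] {c : H} (hc : c ^ 2 = 1) {k : ℕ} (hk : Even k) :
    ∀ r ∈ stRels k, FreeGroup.lift (Sum.elim 1 fun _ => c) r = 1 := by
  rintro r (⟨j, rfl⟩ | rfl)
  · simpa [sq] using hc
  · obtain ⟨m, rfl⟩ := hk
    have : -(((m + m : ℕ) : ℤ) - 2) = 2 * (1 - m) := by push_cast; ring
    rw [map_mul, map_zpow, map_list_prod, List.map_ofFn, this, zpow_mul]
    simp [Function.comp_def, hc]

lemma abelianization_of_t_ne_one {k : ℕ} (hk : Even k) :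
    Abelianization.of (PresentedGroup.of (Sum.inr ()) : PresentedGroup (stRels k)) ≠ 1 := by
  intro h
  have := congrArg (Abelianization.lift (PresentedGroup.toGroup
    (lift_eq_one_of_mem (c := Multiplicative.ofAdd (1 : ZMod 2)) rfl hk))) h
  simp at this

end StRels

/-- For k even, the image of t under the abelianization map
G → G^{ab} has order exactly 2. -/
theorem orderOf_abelianization_t_even (k : ℕ) (hk : 1 ≤ k) (he : Even k) :
    orderOf (Abelianization.of
      (PresentedGroup.of (Sum.inr ()) : PresentedGroup (stRels k))) = 2 :=
  orderOf_eq_prime (StRels.abelianization_of_t_sq k ⟨0, hk⟩)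
    (StRels.abelianization_of_t_ne_one he)
end

section
/- Let G = ⟨a₁, …, a_k, t | a_j t a_j⁻¹ = t⁻¹ for all j, a₁²⋯a_k² = t^{k-2}⟩ with k odd, and let f : G → G^{ab} be the abelianization map. Then f(t) = 2·(f(a₁) + ⋯ + f(a_k)) in G^{ab} (written additively), and f(a₁)+⋯+f(a_k) has order exactly 4. -/
/-- For k odd, in G^{ab} (written multiplicatively) the image of t equals twice the sum
of the images of the a_j's, i.e. f(t) = (∏ f(a_j))², and ∏ f(a_j) has order exactly 4. -/
theorem abelianization_t_odd (k : ℕ) (hk : 1 ≤ k) (ho : Odd k) :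
    Abelianization.of (PresentedGroup.of (Sum.inr ()) : PresentedGroup (stRels k)) =
      (∏ j : Fin k, Abelianization.of
        (PresentedGroup.of (Sum.inl j) : PresentedGroup (stRels k))) ^ 2 ∧
    orderOf (∏ j : Fin k, Abelianization.of
      (PresentedGroup.of (Sum.inl j) : PresentedGroup (stRels k))) = 4 := by
  classical
  set G := PresentedGroup (stRels k) with hG
  let π : FreeGroup (Fin k ⊕ Unit) →* Abelianization G :=
    (Abelianization.of (G := G)).comp (PresentedGroup.mk (stRels k))
  have hπ : ∀ r ∈ stRels k, π r = 1 := by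
    intro r hr
    have h1 : (PresentedGroup.mk (stRels k)) r = 1 := by
      have : r ∈ Subgroup.normalClosure (stRels k) := Subgroup.subset_normalClosure hr
      exact (QuotientGroup.eq_one_iff r).mpr this
    simp [π, h1]
  set u := Abelianization.of (PresentedGroup.of (Sum.inr ()) : G) with hu
  set s := ∏ j : Fin k, Abelianization.of (PresentedGroup.of (Sum.inl j) : G) with hs
  have hau : ∀ x : Fin k ⊕ Unit,
      Abelianization.of (PresentedGroup.of x : G) = π (FreeGroup.of x) := fun _ => rfl
  have hu2 : u ^ 2 = 1 := by
    have h1 := hπ _ (Or.inl ⟨⟨0, hk⟩, rfl⟩)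
    simp only [map_mul, map_inv] at h1
    rw [mul_comm (π (FreeGroup.of (Sum.inl (⟨0, hk⟩ : Fin k)))),
      mul_inv_cancel_right] at h1
    rw [hu, hau, sq]
    exact h1
  have hs2 : s ^ 2 = u ^ ((k : ℤ) - 2) := by
    have h2 := hπ _ (Or.inr rfl)
    rw [map_mul, map_zpow, map_list_prod, List.map_ofFn] at h2
    simp only [Function.comp_def, map_pow] at h2
    rw [List.prod_ofFn] at h2
    have hsq : (∏ j : Fin k, (π (FreeGroup.of (Sum.inl j))) ^ 2) = s ^ 2 := by
      rw [hs, ← Finset.prod_pow]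
      exact Finset.prod_congr rfl fun j _ => by rw [hau]
    rw [hsq, ← hau, ← hu, zpow_neg] at h2
    exact eq_of_mul_inv_eq_one h2
  have huk : u ^ ((k : ℤ) - 2) = u := by
    obtain ⟨m, hm⟩ := ho
    have : (k : ℤ) - 2 = 2 * ((m : ℤ) - 1) + 1 := by push_cast [hm]; ring
    rw [this, zpow_add, zpow_mul, zpow_one, zpow_two, ← sq, hu2, one_zpow, one_mul]
  have hmain : u = s ^ 2 := by rw [hs2, huk]
  refine ⟨hmain, ?_⟩
  have hdvd : orderOf s ∣ 4 := by
    apply orderOf_dvd_of_pow_eq_one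
    have h4 : s ^ 4 = (s ^ 2) ^ 2 := by rw [← pow_mul]
    rw [h4, ← hmain, hu2]
  let fg : Fin k ⊕ Unit → Multiplicative (ZMod 4) := fun x =>
    Multiplicative.ofAdd (match x with | Sum.inl _ => 1 | Sum.inr _ => 2)
  have hrel : ∀ r ∈ stRels k, FreeGroup.lift fg r = 1 := by
    intro r hr
    rcases hr with ⟨j, rfl⟩ | rfl
    · simp only [map_mul, map_inv, FreeGroup.lift_apply_of]
      show Multiplicative.ofAdd (1 : ZMod 4) * Multiplicative.ofAdd (2 : ZMod 4) *
        (Multiplicative.ofAdd (1 : ZMod 4))⁻¹ * Multiplicative.ofAdd (2 : ZMod 4) = 1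
      decide
    · have hfg : ∀ x : Fin k, fg (Sum.inl x) = Multiplicative.ofAdd (1 : ZMod 4) :=
        fun _ => rfl
      have hfg2 : fg (Sum.inr ()) = Multiplicative.ofAdd (2 : ZMod 4) := rfl
      simp only [map_mul, map_zpow, map_list_prod, List.map_ofFn, Function.comp_def,
        map_pow, FreeGroup.lift_apply_of, hfg2, List.prod_ofFn]
      have hp : (∏ x : Fin k, fg (Sum.inl x) ^ 2) =
          ((Multiplicative.ofAdd (1 : ZMod 4)) ^ 2) ^ k := by
        rw [Finset.prod_congr rfl (fun x _ => by rw [hfg x]), Finset.prod_const,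
          Finset.card_univ, Fintype.card_fin]
      rw [hp]
      show ((Multiplicative.ofAdd (1 : ZMod 4)) ^ 2) ^ k *
        ((Multiplicative.ofAdd (2 : ZMod 4)) ^ (-((k : ℤ) - 2))) = 1
      rw [← ofAdd_nsmul, ← ofAdd_nsmul, ← ofAdd_zsmul, ← ofAdd_add]
      rw [← ofAdd_zero]
      congr 1
      simp only [nsmul_eq_mul, zsmul_eq_mul, Nat.cast_ofNat, Int.cast_sub,
        Int.cast_natCast, Int.cast_ofNat, Int.cast_neg, mul_one]
      ring_nf
      decide
  let φ : G →* Multiplicative (ZMod 4) := PresentedGroup.toGroup hrel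
  let ψ : Abelianization G →* Multiplicative (ZMod 4) := Abelianization.lift φ
  have hψs : ψ s = Multiplicative.ofAdd ((k : ZMod 4)) := by
    rw [hs, map_prod]
    have : ∀ j : Fin k, ψ (Abelianization.of (PresentedGroup.of (Sum.inl j) : G)) =
        Multiplicative.ofAdd (1 : ZMod 4) := by
      intro j
      show φ (PresentedGroup.of (Sum.inl j)) = _
      rw [PresentedGroup.toGroup.of]
    rw [Finset.prod_congr rfl fun j _ => this j, Finset.prod_const, Finset.card_univ,
      Fintype.card_fin, ← ofAdd_nsmul]
    congr 1
    simp [nsmul_eq_mul]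
  have h4dvd : (4 : ℕ) ∣ orderOf s := by
    have h1 : orderOf (ψ s) ∣ orderOf s := orderOf_map_dvd ψ s
    have h2 : orderOf (ψ s) = 4 := by
      rw [hψs]
      show addOrderOf ((k : ZMod 4)) = 4
      rw [ZMod.addOrderOf_coe k (by norm_num)]
      have hcop : Nat.gcd 4 k = 1 := by
        have : Nat.Coprime 2 k := Nat.coprime_two_left.mpr ho
        have h22 : Nat.Coprime 4 k := by
          have := Nat.Coprime.pow_left 2 this
          simpa using this
        exact h22
      rw [hcop]
    rw [← h2]; exact h1
  exact Nat.dvd_antisymm hdvd h4dvd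
end

section
/- Let k ≥ 1. Consider the abelian group presented as the quotient of ℤ^{2k+1} (with basis e₀, e₁, …, e_{2k}) by the subgroup generated by the k+2 vectors: v₀ = e₀ + e₁ + e₃ + e₅ + ⋯ + e_{2k-1}, v_{k+1} = e₀ + e₂ + e₄ + ⋯ + e_{2k}, and v_h = e_{2h-1} + e_{2h} for h = 1, …, k. This quotient is isomorphic to ℤ^{k-1} ⊕ ℤ/2. -/
/-- The k+2 relation vectors in ℤ^{2k+1}: row 0 is the indicator of {0,1,3,…,2k-1}
(i.e. j = 0 or j odd), row k+1 is the indicator of {0,2,4,…,2k} (j even), and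
row h (1 ≤ h ≤ k) is the indicator of {2h-1, 2h}. -/
def relVec (k : ℕ) (i : Fin (k + 2)) (j : Fin (2 * k + 1)) : ℤ :=
  if i.val = 0 then (if j.val = 0 ∨ Odd j.val then 1 else 0)
  else if i.val = k + 1 then (if Even j.val then 1 else 0)
  else if j.val = 2 * i.val - 1 ∨ j.val = 2 * i.val then 1 else 0

/-!
Modulo `V_h = e_{2h-1} + e_{2h}` each odd generator is minus the next even one, so `V₀` reads
`e₀ = ∑ e_{2h}` and `V_{k+1}` reads `e₀ = -∑ e_{2h}`. Hence the quotient is generated by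
`e₂, e₄, …, e_{2k}` subject only to `2 ∑ e_{2h} = 0`; as `∑ e_{2h}` is primitive this is
`ℤ^{k-1} ⊕ ℤ/2`. Concretely, with `d_h = x_{2h} - x_{2h-1}`, the map
`x ↦ ((d_h - d_k)_{h<k}, x₀ + d_k mod 2)` is onto and its kernel is generated by the `V_i`.
-/

namespace VanishingCycles

variable {k : ℕ}

-- For `h : Fin k` the holes enclosed by `V_{h+1}` are `oddIdx h = 2h+1` and `evenIdx h = 2h+2`.
def oddIdx (h : Fin k) : Fin (2 * k + 1) := ⟨2 * h + 1, by omega⟩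

def evenIdx (h : Fin k) : Fin (2 * k + 1) := ⟨2 * h + 2, by omega⟩

@[simp] theorem val_oddIdx (h : Fin k) : (oddIdx h).val = 2 * h + 1 := rfl

@[simp] theorem val_evenIdx (h : Fin k) : (evenIdx h).val = 2 * h + 2 := rfl

theorem evenIdx_ne_zero (h : Fin k) : evenIdx h ≠ 0 :=
  Fin.ne_of_val_ne (by simp)

theorem sum_eq_zero_add_sum_oddIdx_add_evenIdx {M : Type*} [AddCommMonoid M]
    (g : Fin (2 * k + 1) → M) :
    ∑ j, g j = g 0 + ∑ h, (g (oddIdx h) + g (evenIdx h)) := by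
  rw [Fin.sum_univ_succ, ← (finProdFinEquiv.trans (finCongr (mul_comm k 2))).sum_comp,
    Fintype.sum_prod_type]
  simp only [Fin.sum_univ_two]
  refine congrArg _ (Finset.sum_congr rfl fun h _ => ?_)
  congr 1 <;> exact congrArg g (Fin.ext (by simp [finProdFinEquiv] <;> omega))

@[simp] theorem relVec_zero_zero : relVec k 0 0 = 1 := rfl

@[simp] theorem relVec_zero_oddIdx (h : Fin k) : relVec k 0 (oddIdx h) = 1 := by
  simp [relVec]

@[simp] theorem relVec_zero_evenIdx (h : Fin k) : relVec k 0 (evenIdx h) = 0 := by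
  simp [relVec, Nat.odd_iff]

@[simp] theorem relVec_last_zero : relVec k (Fin.last (k + 1)) 0 = 1 := by
  simp [relVec]

@[simp] theorem relVec_last_oddIdx (h : Fin k) : relVec k (Fin.last (k + 1)) (oddIdx h) = 0 := by
  simp [relVec]

@[simp] theorem relVec_last_evenIdx (h : Fin k) :
    relVec k (Fin.last (k + 1)) (evenIdx h) = 1 := by
  simp [relVec, Nat.even_iff]

theorem relVec_succ (h : Fin k) :
    relVec k h.castSucc.succ = Pi.single (oddIdx h) 1 + Pi.single (evenIdx h) 1 := by
  ext j
  simp only [relVec, Pi.add_apply, Pi.single_apply, Fin.ext_iff, val_oddIdx, val_evenIdx]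
  split_ifs <;> simp_all <;> omega

theorem relVec_succ_zero (h : Fin k) : relVec k h.castSucc.succ 0 = 0 := by
  simp [relVec_succ, Fin.ext_iff]

abbrev relations (k : ℕ) : AddSubgroup (Fin (2 * k + 1) → ℤ) :=
  AddSubgroup.closure (Set.range (relVec k))

abbrev H1 (k : ℕ) := (Fin (2 * k + 1) → ℤ) ⧸ relations k

def gen (j : Fin (2 * k + 1)) : H1 k := (Pi.single j 1 : Fin (2 * k + 1) → ℤ)

theorem mk_eq_zsmul_gen_zero_add_sum (x : Fin (2 * k + 1) → ℤ) :
    (x : H1 k) = x 0 • gen 0 +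
      ∑ h, (x (oddIdx h) • gen (oddIdx h) + x (evenIdx h) • gen (evenIdx h)) := by
  conv_lhs => rw [pi_eq_sum_univ' x]
  rw [← sum_eq_zero_add_sum_oddIdx_add_evenIdx (fun j => x j • gen j)]
  simp [gen]

theorem mk_relVec (i : Fin (k + 2)) : (relVec k i : H1 k) = 0 :=
  (QuotientAddGroup.eq_zero_iff _).2 (AddSubgroup.subset_closure ⟨i, rfl⟩)

theorem gen_oddIdx (h : Fin k) : gen (oddIdx h) = -gen (evenIdx h) := by
  rw [eq_neg_iff_add_eq_zero, ← mk_relVec h.castSucc.succ, relVec_succ]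
  rfl

theorem sum_gen_evenIdx : ∑ h, gen (evenIdx h) = (gen 0 : H1 k) := by
  have hV₀ := mk_relVec (k := k) 0
  simp only [mk_eq_zsmul_gen_zero_add_sum, relVec_zero_zero, relVec_zero_oddIdx, relVec_zero_evenIdx,
    one_smul, zero_smul, add_zero, gen_oddIdx, Finset.sum_neg_distrib] at hV₀
  exact (add_neg_eq_zero.1 hV₀).symm

theorem zsmul_gen_zero_of_two_dvd {m : ℤ} (hm : 2 ∣ m) : m • (gen 0 : H1 k) = 0 := by
  have hV := mk_relVec (k := k) (Fin.last (k + 1))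
  simp only [mk_eq_zsmul_gen_zero_add_sum, relVec_last_zero, relVec_last_oddIdx, relVec_last_evenIdx,
    one_smul, zero_smul, zero_add, sum_gen_evenIdx] at hV
  obtain ⟨r, rfl⟩ := hm
  rw [mul_zsmul', two_zsmul, hV, zsmul_zero]

def diffAt (x : Fin (2 * k + 1) → ℤ) (h : Fin k) : ℤ := x (evenIdx h) - x (oddIdx h)

theorem mk_eq_of_diffAt_eq {x : Fin (2 * k + 1) → ℤ} {c : ℤ} (hc : ∀ h, diffAt x h = c) :
    (x : H1 k) = (x 0 + c) • gen 0 := by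
  have hpair : ∀ h, x (oddIdx h) • gen (oddIdx h) + x (evenIdx h) • gen (evenIdx h) =
      c • (gen (evenIdx h) : H1 k) := fun h => by
    rw [gen_oddIdx, ← hc h, diffAt, sub_zsmul, zsmul_neg]
    abel
  rw [mk_eq_zsmul_gen_zero_add_sum, Finset.sum_congr rfl fun h _ => hpair h,
    ← Finset.smul_sum (M := ℤ) (N := H1 k), sum_gen_evenIdx, add_zsmul]

theorem diffAt_relVec_zero (h : Fin k) : diffAt (relVec k 0) h = -1 := by
  simp [diffAt]

theorem diffAt_relVec_last (h : Fin k) : diffAt (relVec k (Fin.last (k + 1))) h = 1 := by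
  simp [diffAt]

theorem diffAt_relVec_succ (h h' : Fin k) : diffAt (relVec k h.castSucc.succ) h' = 0 := by
  simp only [diffAt, relVec_succ, Pi.add_apply, Pi.single_apply, Fin.ext_iff, val_oddIdx,
    val_evenIdx]
  split_ifs <;> omega

theorem diffAt_single_evenIdx (c h : Fin k) :
    diffAt (Pi.single (evenIdx c) 1) h = if h = c then 1 else 0 := by
  simp only [diffAt, Pi.single_apply, Fin.ext_iff, val_oddIdx, val_evenIdx]
  split_ifs <;> omega

theorem diffAt_single_zero (h : Fin k) : diffAt (Pi.single 0 1) h = 0 := by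
  simp [diffAt, Fin.ext_iff]

/-- Stated for `k = n + 1`, so that `ℤ^{k-1}` is `Fin n → ℤ` on the nose. -/
def toProdZModTwo (n : ℕ) : (Fin (2 * (n + 1) + 1) → ℤ) →+ (Fin n → ℤ) × ZMod 2 where
  toFun x := (fun m => diffAt x m.castSucc - diffAt x (Fin.last n),
    ((x 0 + diffAt x (Fin.last n) : ℤ) : ZMod 2))
  map_zero' := by ext <;> simp [diffAt]
  map_add' x y := by ext <;> simp [diffAt] <;> ring

section toProdZModTwo

variable {n : ℕ}

theorem toProdZModTwo_eq_zero_iff (x : Fin (2 * (n + 1) + 1) → ℤ) :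
    toProdZModTwo n x = 0 ↔
      (∀ h, diffAt x h = diffAt x (Fin.last n)) ∧ 2 ∣ x 0 + diffAt x (Fin.last n) := by
  simp only [toProdZModTwo, AddMonoidHom.coe_mk, ZeroHom.coe_mk, Prod.mk_eq_zero, funext_iff,
    Pi.zero_apply, sub_eq_zero, ZMod.intCast_zmod_eq_zero_iff_dvd, Fin.forall_fin_succ',
    Nat.cast_ofNat, and_true]

theorem toProdZModTwo_relVec (i : Fin (n + 3)) : toProdZModTwo n (relVec (n + 1) i) = 0 := by
  rw [toProdZModTwo_eq_zero_iff]
  induction i using Fin.lastCases with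
  | last => simp [diffAt_relVec_last]
  | cast i =>
    induction i using Fin.cases with
    | zero => simp [diffAt_relVec_zero]
    | succ h => simp [diffAt_relVec_succ, relVec_succ_zero]

theorem ker_toProdZModTwo : (toProdZModTwo n).ker = relations (n + 1) := by
  refine le_antisymm (fun x hx => ?_) ((AddSubgroup.closure_le _).2 ?_)
  · obtain ⟨hdiff, htwo⟩ := (toProdZModTwo_eq_zero_iff x).1 hx
    rw [← QuotientAddGroup.eq_zero_iff, mk_eq_of_diffAt_eq hdiff]
    exact zsmul_gen_zero_of_two_dvd htwo
  · rintro _ ⟨i, rfl⟩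
    exact toProdZModTwo_relVec i

theorem toProdZModTwo_single_evenIdx (m : Fin n) :
    toProdZModTwo n (Pi.single (evenIdx m.castSucc) 1) = (Pi.single m 1, 0) := by
  ext m' <;> simp [toProdZModTwo, diffAt_single_evenIdx, Pi.single_apply, evenIdx_ne_zero,
    (Fin.castSucc_lt_last m).ne']

theorem toProdZModTwo_single_zero : toProdZModTwo n (Pi.single 0 1) = (0, 1) := by
  ext <;> simp [toProdZModTwo, diffAt_single_zero]

theorem toProdZModTwo_surjective : Function.Surjective (toProdZModTwo n) := by
  rintro ⟨a, t⟩
  refine ⟨∑ m, a m • Pi.single (evenIdx m.castSucc) 1 + (t.val : ℤ) • Pi.single 0 1, ?_⟩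
  rw [map_add, map_sum]
  simp only [map_zsmul, toProdZModTwo_single_evenIdx, toProdZModTwo_single_zero]
  ext m <;> simp [Prod.fst_sum, Prod.snd_sum, Finset.sum_apply, Pi.single_apply]

end toProdZModTwo

end VanishingCycles

/-- The quotient of ℤ^{2k+1} by the subgroup generated by the k+2 vectors
v₀, v₁, …, v_k, v_{k+1} is ℤ^{k-1} ⊕ ℤ/2. -/
theorem quotient_by_vanishing_cycles (k : ℕ) (hk : 1 ≤ k) :
    Nonempty (((Fin (2 * k + 1) → ℤ) ⧸
        AddSubgroup.closure (Set.range (relVec k))) ≃+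
      ((Fin (k - 1) → ℤ) × ZMod 2)) := by
  obtain ⟨n, rfl⟩ := Nat.exists_eq_add_of_le' hk
  exact ⟨(QuotientAddGroup.quotientAddEquivOfEq VanishingCycles.ker_toProdZModTwo.symm).trans
    (QuotientAddGroup.quotientKerEquivOfSurjective _ VanishingCycles.toProdZModTwo_surjective)⟩
end
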